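/- arXiv:2101.09890 — 2 statements merged into one kernel-verified Lean document; each statement's English description precedes it below -/
import Mathlib

section
/- Let T > 0, α ≥ 0 with αT ≤ 1, and c ≥ 0, and define the iterates y_k : [0,T] → ℝ by y_0(t) = c and y_k(t) = c − α ∫_t^T max(y_{k−1}(s), 0) ds for k ≥ 1. Then for every k ≥ 0 and every t ∈ [0,T], y_k(t) is nonnegative and y_k(t) = c · Σ_{i=0}^k (−α)^i (T−t)^i / i!. -/
open scoped BigOperators

/-- for the CVA Picard iterates `y_0(t) = c`,
`y_k(t) = c − α ∫_t^T max(y_{k−1}(s), 0) ds` with `α ≥ 0`, `αT ≤ 1` and `c ≥ 0`,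
every iterate is nonnegative on `[0,T]` and equals
`c · Σ_{i=0}^k (−α)^i (T−t)^i / i!`. -/
theorem cva_picard_iterates_nonneg_and_partial_sum (T : ℝ) (hT : 0 < T)
    (α : ℝ) (hα : 0 ≤ α) (hαT : α * T ≤ 1) (c : ℝ) (hc : 0 ≤ c)
    (y : ℕ → ℝ → ℝ)
    (h0 : ∀ t, y 0 t = c)
    (hrec : ∀ k : ℕ, ∀ t ∈ Set.Icc (0 : ℝ) T,
      y (k + 1) t = c - α * ∫ s in t..T, max (y k s) 0) :
    ∀ k : ℕ, ∀ t ∈ Set.Icc (0 : ℝ) T,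
      0 ≤ y k t ∧
      y k t = c * ∑ i ∈ Finset.range (k + 1),
        (-α) ^ i * (T - t) ^ i / (Nat.factorial i : ℝ) := by
  have key : ∀ k : ℕ, ∀ t ∈ Set.Icc (0 : ℝ) T,
      (0 ≤ y k t ∧ y k t ≤ c) ∧
      y k t = c * ∑ i ∈ Finset.range (k + 1),
        (-α) ^ i * (T - t) ^ i / (Nat.factorial i : ℝ) := by
    intro k
    induction k with
    | zero =>
      intro t _
      refine ⟨⟨by rw [h0]; exact hc, by rw [h0]⟩, by simp [h0]⟩
    | succ k ih =>
      intro t ht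
      obtain ⟨ht0, htT⟩ := ht
      set g : ℝ → ℝ := fun s => ∑ i ∈ Finset.range (k + 1),
        (c * (-α) ^ i / (Nat.factorial i : ℝ)) * (T - s) ^ i with hg
      have hgcont : Continuous g := by
        apply continuous_finset_sum
        intro i _
        fun_prop
      have hgeq : ∀ s ∈ Set.Icc t T, max (y k s) 0 = g s := by
        intro s hs
        have hs' : s ∈ Set.Icc (0 : ℝ) T := ⟨le_trans ht0 hs.1, hs.2⟩
        obtain ⟨⟨h1, _⟩, h2⟩ := ih s hs'
        rw [max_eq_left h1, h2, hg, Finset.mul_sum]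
        apply Finset.sum_congr rfl
        intro i _
        ring
      have hcongr : (∫ s in t..T, max (y k s) 0) = ∫ s in t..T, g s := by
        apply intervalIntegral.integral_congr
        intro s hs
        rw [Set.uIcc_of_le htT] at hs
        exact hgeq s hs
      have hpow : ∀ i : ℕ, (∫ s in t..T, (T - s) ^ i) = (T - t) ^ (i + 1) / (i + 1) := by
        intro i
        rw [intervalIntegral.integral_comp_sub_left (fun x => x ^ i) T, integral_pow]
        simp
      have hgint : (∫ s in t..T, g s)
          = ∑ i ∈ Finset.range (k + 1),
            (c * (-α) ^ i / (Nat.factorial i : ℝ)) * ((T - t) ^ (i + 1) / (i + 1)) := by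
        rw [hg]
        rw [intervalIntegral.integral_finset_sum]
        · refine Finset.sum_congr rfl fun i _ => ?_
          rw [intervalIntegral.integral_const_mul, hpow i]
        · intro i _
          apply Continuous.intervalIntegrable
          fun_prop
      have hy : y (k + 1) t = c - α * ∫ s in t..T, g s := by
        rw [hrec k t ⟨ht0, htT⟩, hcongr]
      have hterm : ∀ i ∈ Finset.range (k + 1),
          c * ((-α) ^ (i + 1) * (T - t) ^ (i + 1) / (Nat.factorial (i + 1) : ℝ))
          = -(α * (c * (-α) ^ i / (Nat.factorial i : ℝ) * ((T - t) ^ (i + 1) / ((i : ℝ) + 1)))) := by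
        intro i _
        have hfac : (Nat.factorial (i + 1) : ℝ) = ((i : ℝ) + 1) * (Nat.factorial i : ℝ) := by
          rw [Nat.factorial_succ]; push_cast; ring
        have h1 : (Nat.factorial i : ℝ) ≠ 0 := Nat.cast_ne_zero.mpr (Nat.factorial_ne_zero i)
        have h2 : ((i : ℝ) + 1) ≠ 0 := by positivity
        rw [hfac]
        field_simp
        ring
      have hmain : c * ∑ i ∈ Finset.range (k + 1 + 1),
            (-α) ^ i * (T - t) ^ i / (Nat.factorial i : ℝ)
          = c - α * ∑ i ∈ Finset.range (k + 1),
            (c * (-α) ^ i / (Nat.factorial i : ℝ)) * ((T - t) ^ (i + 1) / ((i : ℝ) + 1)) := by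
        conv_lhs => rw [Finset.sum_range_succ']
        rw [mul_add, Finset.mul_sum]
        simp only [pow_zero, Nat.factorial_zero, Nat.cast_one, one_mul, div_one, mul_one]
        rw [Finset.sum_congr rfl hterm]
        rw [Finset.sum_neg_distrib, ← Finset.mul_sum]
        ring
      have hform : y (k + 1) t = c * ∑ i ∈ Finset.range (k + 1 + 1),
          (-α) ^ i * (T - t) ^ i / (Nat.factorial i : ℝ) := by
        rw [hy, hgint]
        exact hmain.symm
      -- nonnegativity and upper bound
      have hInn : 0 ≤ ∫ s in t..T, g s := by
        rw [← hcongr]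
        apply intervalIntegral.integral_nonneg htT
        intro s _
        exact le_max_right _ _
      have hIub : (∫ s in t..T, g s) ≤ c * (T - t) := by
        have : (∫ s in t..T, (fun _ => c) s) = c * (T - t) := by simp [mul_comm]
        rw [← this]
        apply intervalIntegral.integral_mono_on htT
          (hgcont.intervalIntegrable t T)
          (intervalIntegrable_const)
        intro s hs
        rw [← hgeq s hs]
        have hs' : s ∈ Set.Icc (0 : ℝ) T := ⟨le_trans ht0 hs.1, hs.2⟩
        obtain ⟨⟨h1, h2⟩, _⟩ := ih s hs'
        rw [max_eq_left h1]
        exact h2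
      have hnn : 0 ≤ y (k + 1) t := by
        rw [hy]
        nlinarith [mul_le_mul_of_nonneg_left hIub hα]
      have hub : y (k + 1) t ≤ c := by
        rw [hy]
        nlinarith [mul_nonneg hα hInn]
      exact ⟨⟨hnn, hub⟩, hform⟩
  intro k t ht
  obtain ⟨⟨h1, _⟩, h2⟩ := key k t ht
  exact ⟨h1, h2⟩
end

section
/- Let d, k ≥ 1, let Σ be a symmetric positive-definite d × d real matrix with centered Gaussian density p_Σ on ℝ^d, let g : ℝ^d → ℝ be bounded and measurable, and let m : ℝ^k → ℝ^d be continuously differentiable. Then the function F(x) := ∫_{ℝ^d} g(m(x) + y) p_Σ(y) dy is differentiable on ℝ^k, and for every j ∈ {1,…,k}, ∂_{x_j} F(x) = Σ_{i=1}^d ∂_{x_j} m^i(x) · ∫_{ℝ^d} g(m(x) + y) (Σ^{−1} y)_i p_Σ(y) dy. -/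
open scoped BigOperators

/-- Density `p_Σ(x) = (2π)^{−d/2} (det Σ)^{−1/2} exp(−⟨x, Σ⁻¹ x⟩/2)` of the centered
Gaussian measure on `ℝ^d` with covariance matrix `Σ`. -/
noncomputable def gaussDensity {d : ℕ} (S : Matrix (Fin d) (Fin d) ℝ)
    (x : Fin d → ℝ) : ℝ :=
  (Real.sqrt ((2 * Real.pi) ^ d * S.det))⁻¹
    * Real.exp (-(∑ i, x i * (S⁻¹).mulVec x i) / 2)

/-! Write the function as `Φ ∘ m` with `Φ z = ∫ g (z + y) p_Σ(y) dy = ∫ g u p_Σ(u - z) du`: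
after the change of variables `z` sits only in the smooth density, so `Φ` is differentiated
under the integral sign without differentiating `g`, and the chain rule handles `m`.
The gradient `∇p_Σ(y) = -p_Σ(y) Σ⁻¹ y` is at most `C ‖y‖ exp (-μ ‖y‖² / 2)`, where
`μ ‖y‖² ≤ ⟨y, Σ⁻¹ y⟩` comes from minimising the quadratic form on the unit sphere.
Since `‖u‖² ≤ 2 ‖u - z‖² + 2 ‖z‖²`, the translates `∇p_Σ(u - z)` with `z` in a unit ball
are dominated by the single integrable function `(a ‖u‖ + b) exp (-μ ‖u‖² / 4)`. -/

open MeasureTheory Real Filter Topology Matrix Metric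

section QuadraticForm

variable {n : Type*} [Fintype n]

noncomputable def dotProductCLM (w : n → ℝ) : (n → ℝ) →L[ℝ] ℝ :=
  LinearMap.toContinuousLinearMap (dotProductBilin ℝ ℝ w)

@[simp]
theorem dotProductCLM_apply (w v : n → ℝ) : dotProductCLM w v = w ⬝ᵥ v := by
  simp [dotProductCLM]

theorem hasFDerivAt_dotProduct_mulVec_self {A : Matrix n n ℝ} (hA : A.IsHermitian) (y : n → ℝ) :
    HasFDerivAt (fun y : n → ℝ => y ⬝ᵥ A *ᵥ y) ((2 : ℝ) • dotProductCLM (A *ᵥ y)) y := by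
  have hA' : HasFDerivAt (fun y : n → ℝ => A *ᵥ y)
      (LinearMap.toContinuousLinearMap A.mulVecLin) y :=
    (LinearMap.toContinuousLinearMap A.mulVecLin).hasFDerivAt
  refine (HasFDerivAt.sum (u := Finset.univ) fun i _ =>
    (hasFDerivAt_apply i y).mul ((hasFDerivAt_apply i (A *ᵥ y)).comp y hA')).congr_of_eventuallyEq
    (.of_forall fun z => by simp [dotProduct]) |>.congr_fderiv ?_
  ext v
  have hsymm : y ⬝ᵥ A *ᵥ v = A *ᵥ y ⬝ᵥ v := by
    rw [dotProduct_mulVec, ← mulVec_transpose, ← conjTranspose_eq_transpose_of_trivial, hA.eq]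
  simp only [Function.comp_apply, Finset.sum_add_distrib, _root_.add_apply, _root_.sum_apply,
    _root_.smul_apply, ContinuousLinearMap.comp_apply, LinearMap.coe_toContinuousLinearMap',
    mulVecBilin_apply, ContinuousLinearMap.proj_apply, smul_eq_mul, dotProductCLM_apply]
  change y ⬝ᵥ A *ᵥ v + A *ᵥ y ⬝ᵥ v = 2 * (A *ᵥ y ⬝ᵥ v)
  rw [hsymm]; ring

theorem abs_mulVec_dotProduct_le (A : Matrix n n ℝ) (y v : n → ℝ) :
    |A *ᵥ y ⬝ᵥ v| ≤ (∑ i, ∑ j, |A i j|) * ‖y‖ * ‖v‖ := by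
  simp only [dotProduct, mulVec, Finset.sum_mul]
  refine (Finset.abs_sum_le_sum_abs _ _).trans (Finset.sum_le_sum fun i _ => ?_)
  refine (Finset.abs_sum_le_sum_abs _ _).trans (Finset.sum_le_sum fun j _ => ?_)
  rw [abs_mul, abs_mul]
  gcongr
  · simpa using norm_le_pi_norm y j
  · simpa using norm_le_pi_norm v i

theorem Matrix.PosDef.exists_pos_mul_sq_norm_le {A : Matrix n n ℝ} (hA : A.PosDef) :
    ∃ c > 0, ∀ y : n → ℝ, c * ‖y‖ ^ 2 ≤ y ⬝ᵥ A *ᵥ y := by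
  rcases isEmpty_or_nonempty n with hn | hn
  · exact ⟨1, one_pos, fun y => by simp [Subsingleton.elim y 0]⟩
  have hq : Continuous fun y : n → ℝ => y ⬝ᵥ A *ᵥ y := by fun_prop
  obtain ⟨y₀, hy₀, hmin⟩ := (isCompact_sphere (0 : n → ℝ) 1).exists_isMinOn
    (NormedSpace.sphere_nonempty.mpr zero_le_one) hq.continuousOn
  have hy₀ : y₀ ≠ 0 := ne_zero_of_mem_unit_sphere ⟨y₀, hy₀⟩
  refine ⟨_, by simpa [dotProduct_comm] using hA.dotProduct_mulVec_pos hy₀, fun y => ?_⟩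
  rcases eq_or_ne y 0 with rfl | hy
  · simp
  have hy' : 0 < ‖y‖ := norm_pos_iff.mpr hy
  have hw : ‖y‖⁻¹ • y ∈ sphere (0 : n → ℝ) 1 := by
    simp [norm_smul, hy'.ne']
  have hle : y₀ ⬝ᵥ A *ᵥ y₀ ≤ (‖y‖⁻¹ • y) ⬝ᵥ A *ᵥ (‖y‖⁻¹ • y) := hmin hw
  rw [mulVec_smul, smul_dotProduct, dotProduct_smul, smul_eq_mul, smul_eq_mul] at hle
  calc (y₀ ⬝ᵥ A *ᵥ y₀) * ‖y‖ ^ 2 ≤ ‖y‖⁻¹ * (‖y‖⁻¹ * (y ⬝ᵥ A *ᵥ y)) * ‖y‖ ^ 2 := by gcongr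
    _ = y ⬝ᵥ A *ᵥ y := by field_simp

end QuadraticForm

theorem exp_neg_mul_sq_norm_sub_le {E : Type*} [SeminormedAddCommGroup E] {b : ℝ} (hb : 0 ≤ b)
    (u z : E) : exp (-b * ‖u - z‖ ^ 2) ≤ exp (b * ‖z‖ ^ 2) * exp (-(b / 2) * ‖u‖ ^ 2) := by
  rw [← exp_add, exp_le_exp]
  have h : ‖u‖ ^ 2 ≤ 2 * ‖u - z‖ ^ 2 + 2 * ‖z‖ ^ 2 := by
    nlinarith [norm_le_norm_sub_add u z, sq_nonneg (‖u - z‖ - ‖z‖), norm_nonneg u]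
  nlinarith [mul_le_mul_of_nonneg_left h hb]

theorem integral_comp_add_mul_eq {G : Type*} [AddCommGroup G] [MeasurableSpace G] [MeasurableAdd G]
    {μ : Measure G} [μ.IsAddLeftInvariant] (g φ : G → ℝ) (z : G) :
    ∫ y, g (z + y) * φ y ∂μ = ∫ u, g u * φ (u - z) ∂μ := by
  simpa using integral_add_left_eq_self (μ := μ) (fun u => g u * φ (u - z)) z

theorem integrable_pow_norm_mul_exp_neg_mul_sq_norm {E : Type*} [NormedAddCommGroup E]
    [NormedSpace ℝ E] [FiniteDimensional ℝ E] [MeasurableSpace E] [BorelSpace E]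
    (μ : Measure E) [μ.IsAddHaarMeasure] {b : ℝ} (hb : 0 < b) (n : ℕ) :
    Integrable (fun x : E => ‖x‖ ^ n * exp (-b * ‖x‖ ^ 2)) μ := by
  rcases subsingleton_or_nontrivial E with hE | hE
  · exact .of_finite
  · rw [integrable_fun_norm_addHaar μ (f := fun t => t ^ n * exp (-b * t ^ 2))]
    have hs : (-1 : ℝ) < (Module.finrank ℝ E - 1 + n : ℕ) := by
      linarith [Nat.cast_nonneg (α := ℝ) (Module.finrank ℝ E - 1 + n)]
    refine (integrableOn_rpow_mul_exp_neg_mul_sq hb hs).congr_fun (fun t _ => ?_) measurableSet_Ioi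
    simp only [smul_eq_mul, Real.rpow_natCast, pow_add]
    ring

section Translates

variable {E : Type*} [NormedAddCommGroup E] [NormedSpace ℝ E] [FiniteDimensional ℝ E]
  [MeasurableSpace E] [BorelSpace E] {μ : Measure E} [μ.IsAddHaarMeasure]
  {φ g G : E → ℝ} {C : ℝ} {s : Set E} {z₀ : E}

theorem hasFDerivAt_integral_comp_add_mul (hφ : Differentiable ℝ φ) (hφ_int : Integrable φ μ)
    (hg : Measurable g) (hgC : ∀ x, ‖g x‖ ≤ C) (hG : Integrable G μ) (hs : s ∈ 𝓝 z₀)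
    (hφ'G : ∀ z ∈ s, ∀ u, ‖fderiv ℝ φ (u - z)‖ ≤ G u) :
    HasFDerivAt (fun z => ∫ y, g (z + y) * φ y ∂μ)
      (-∫ y, g (z₀ + y) • fderiv ℝ φ y ∂μ) z₀ := by
  have hderiv := hasFDerivAt_integral_of_dominated_of_fderiv_le (μ := μ) hs
    (F := fun z u => g u * φ (u - z)) (F' := fun z u => -(g u • fderiv ℝ φ (u - z)))
    (bound := fun u => C * G u)
    (.of_forall fun z => (hg.mul (hφ.continuous.measurable.comp
      (measurable_id.sub_const z))).aestronglyMeasurable)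
    ((hφ_int.comp_sub_right z₀).bdd_mul hg.aestronglyMeasurable (.of_forall hgC))
    (hg.smul ((measurable_fderiv ℝ φ).comp (measurable_id.sub_const z₀))).neg.aestronglyMeasurable
    (.of_forall fun u z hz => by
      rw [norm_neg, norm_smul]
      exact mul_le_mul (hgC u) (hφ'G z hz u) (norm_nonneg _) ((norm_nonneg _).trans (hgC u)))
    (hG.const_mul C)
    (.of_forall fun u z _ =>
      (((hφ (u - z)).hasFDerivAt.comp z ((hasFDerivAt_const u z).sub (hasFDerivAt_id z))).const_mul
        (g u)).congr_fderiv (by ext v; simp))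
  simp_rw [integral_comp_add_mul_eq (μ := μ) g φ]
  refine hderiv.congr_fderiv ?_
  rw [integral_neg, ← integral_add_left_eq_self (μ := μ) _ z₀]
  simp

theorem integrable_comp_add_smul_fderiv (hg : Measurable g) (hgC : ∀ x, ‖g x‖ ≤ C)
    (hG : Integrable G μ) (hφ'G : ∀ u, ‖fderiv ℝ φ (u - z₀)‖ ≤ G u) :
    Integrable (fun y => g (z₀ + y) • fderiv ℝ φ y) μ := by
  have h : Integrable (fun u => g u • fderiv ℝ φ (u - z₀)) μ :=
    (hG.const_mul C).mono'
      (hg.smul ((measurable_fderiv ℝ φ).comp (measurable_id.sub_const z₀))).aestronglyMeasurable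
      (.of_forall fun u => by
        rw [norm_smul]
        exact mul_le_mul (hgC u) (hφ'G u) (norm_nonneg _) ((norm_nonneg _).trans (hgC u)))
  simpa using h.comp_add_left z₀

end Translates

theorem gaussDensity_nonneg {d : ℕ} (S : Matrix (Fin d) (Fin d) ℝ) (y : Fin d → ℝ) :
    0 ≤ gaussDensity S y := by
  unfold gaussDensity; positivity

section GaussDensity

variable {d : ℕ} {S : Matrix (Fin d) (Fin d) ℝ}

theorem hasFDerivAt_gaussDensity (hS : S.IsHermitian) (y : Fin d → ℝ) :
    HasFDerivAt (gaussDensity S) (-gaussDensity S y • dotProductCLM (S⁻¹ *ᵥ y)) y := by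
  have h := ((hasFDerivAt_dotProduct_mulVec_self hS.inv y).fun_neg.mul_const (2⁻¹ : ℝ)).exp
    |>.const_mul (Real.sqrt ((2 * Real.pi) ^ d * S.det))⁻¹
  refine (h.congr_of_eventuallyEq (.of_forall fun v => ?_)).congr_fderiv ?_
  · simp [gaussDensity, dotProduct, div_eq_mul_inv]
  ext v
  simp only [dotProduct, neg_mul, smul_neg, ne_eq, OfNat.ofNat_ne_zero, not_false_eq_true,
    inv_smul_smul₀, _root_.neg_apply, _root_.smul_apply, dotProductCLM_apply, smul_eq_mul,
    gaussDensity, div_eq_mul_inv, neg_inj]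
  ring

theorem fderiv_gaussDensity (hS : S.IsHermitian) :
    fderiv ℝ (gaussDensity S) = fun y => -gaussDensity S y • dotProductCLM (S⁻¹ *ᵥ y) :=
  funext fun y => (hasFDerivAt_gaussDensity hS y).fderiv

theorem differentiable_gaussDensity (hS : S.IsHermitian) : Differentiable ℝ (gaussDensity S) :=
  fun y => (hasFDerivAt_gaussDensity hS y).differentiableAt

theorem gaussDensity_le {μ : ℝ} (hμ : ∀ y : Fin d → ℝ, μ * ‖y‖ ^ 2 ≤ y ⬝ᵥ S⁻¹ *ᵥ y)
    (y : Fin d → ℝ) : gaussDensity S y ≤ gaussDensity S 0 * exp (-(μ / 2) * ‖y‖ ^ 2) := by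
  unfold gaussDensity
  simp only [Pi.zero_apply, zero_mul, Finset.sum_const_zero, neg_zero, zero_div, exp_zero, mul_one]
  gcongr
  have := hμ y
  change _ ≤ ∑ i, y i * (S⁻¹ *ᵥ y) i at this
  linarith

theorem norm_fderiv_gaussDensity_le (hS : S.IsHermitian) (y : Fin d → ℝ) :
    ‖fderiv ℝ (gaussDensity S) y‖ ≤ gaussDensity S y * ((∑ i, ∑ j, |S⁻¹ i j|) * ‖y‖) := by
  rw [(hasFDerivAt_gaussDensity hS y).fderiv]
  refine ContinuousLinearMap.opNorm_le_bound _
    (mul_nonneg (gaussDensity_nonneg S y) (by positivity)) fun v => ?_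
  rw [_root_.smul_apply, dotProductCLM_apply, norm_smul, norm_neg, Real.norm_eq_abs,
    Real.norm_eq_abs, abs_of_nonneg (gaussDensity_nonneg S y), mul_assoc]
  exact mul_le_mul_of_nonneg_left (abs_mulVec_dotProduct_le _ y v) (gaussDensity_nonneg S y)

theorem integrable_gaussDensity (hS : S.PosDef) : Integrable (gaussDensity S) := by
  obtain ⟨μ, hμ, hle⟩ := hS.inv.exists_pos_mul_sq_norm_le
  refine ((integrable_pow_norm_mul_exp_neg_mul_sq_norm volume (half_pos hμ) 0).const_mul
    (gaussDensity S 0)).mono'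
    (differentiable_gaussDensity hS.isHermitian).continuous.aestronglyMeasurable
    (.of_forall fun y => ?_)
  rw [Real.norm_of_nonneg (gaussDensity_nonneg S y)]
  simpa using gaussDensity_le hle y

theorem exists_integrable_bound_fderiv_gaussDensity_sub (hS : S.PosDef) (z₀ : Fin d → ℝ) :
    ∃ G : (Fin d → ℝ) → ℝ, Integrable G ∧
      ∀ z ∈ ball z₀ 1, ∀ u, ‖fderiv ℝ (gaussDensity S) (u - z)‖ ≤ G u := by
  obtain ⟨μ, hμ, hle⟩ := hS.inv.exists_pos_mul_sq_norm_le
  set K := ∑ i, ∑ j, |S⁻¹ i j|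
  set R := ‖z₀‖ + 1
  set A := gaussDensity S 0 * K * exp (μ / 2 * R ^ 2)
  have hb : 0 < μ / 2 / 2 := by positivity
  refine ⟨fun u => A * (‖u‖ ^ 1 * exp (-(μ / 2 / 2) * ‖u‖ ^ 2))
      + A * R * (‖u‖ ^ 0 * exp (-(μ / 2 / 2) * ‖u‖ ^ 2)),
    ((integrable_pow_norm_mul_exp_neg_mul_sq_norm volume hb 1).const_mul A).add
      ((integrable_pow_norm_mul_exp_neg_mul_sq_norm volume hb 0).const_mul (A * R)),
    fun z hz u => ?_⟩
  have hzR : ‖z‖ ≤ R := by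
    have := norm_le_norm_add_norm_sub' z z₀
    rw [mem_ball, dist_eq_norm] at hz
    linarith
  have hK : 0 ≤ K := by positivity
  have hp0 := gaussDensity_nonneg S 0
  calc ‖fderiv ℝ (gaussDensity S) (u - z)‖
      ≤ gaussDensity S (u - z) * (K * ‖u - z‖) := norm_fderiv_gaussDensity_le hS.isHermitian _
    _ ≤ gaussDensity S 0 * exp (-(μ / 2) * ‖u - z‖ ^ 2) * (K * (‖u‖ + R)) := by
        gcongr
        · exact gaussDensity_le hle _
        · exact (norm_sub_le u z).trans (by linarith)
    _ ≤ gaussDensity S 0 * (exp (μ / 2 * R ^ 2) * exp (-(μ / 2 / 2) * ‖u‖ ^ 2))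
          * (K * (‖u‖ + R)) := by
        gcongr
        exact (exp_neg_mul_sq_norm_sub_le (by positivity) u z).trans (by gcongr)
    _ = _ := by ring

theorem hasFDerivAt_integral_comp_add_mul_gaussDensity (hS : S.PosDef)
    {g : (Fin d → ℝ) → ℝ} (hg : Measurable g) {C : ℝ} (hgC : ∀ x, ‖g x‖ ≤ C) (z : Fin d → ℝ) :
    HasFDerivAt (fun z => ∫ y, g (z + y) * gaussDensity S y)
      (dotProductCLM fun i => ∫ y, g (z + y) * (S⁻¹ *ᵥ y) i * gaussDensity S y) z := by
  obtain ⟨G, hG, hbound⟩ := exists_integrable_bound_fderiv_gaussDensity_sub hS z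
  have hint := integrable_comp_add_smul_fderiv hg hgC hG (hbound z (mem_ball_self one_pos))
  refine (hasFDerivAt_integral_comp_add_mul (differentiable_gaussDensity hS.isHermitian)
    (integrable_gaussDensity hS) hg hgC hG (ball_mem_nhds z one_pos) hbound).congr_fderiv ?_
  refine ContinuousLinearMap.coe_injective (LinearMap.pi_ext fun i t => ?_)
  rw [ContinuousLinearMap.coe_coe, ContinuousLinearMap.coe_coe, _root_.neg_apply,
    ContinuousLinearMap.integral_apply hint, ← integral_neg, dotProductCLM_apply, dotProduct_single,
    ← integral_mul_const]
  congr 1 with y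
  simp only [fderiv_gaussDensity hS.isHermitian, _root_.smul_apply, dotProductCLM_apply,
    dotProduct_single, smul_eq_mul]
  ring

end GaussDensity

theorem gaussian_smoothing_differentiable_general {d k : ℕ}
    (S : Matrix (Fin d) (Fin d) ℝ) (hS : S.PosDef)
    (g : (Fin d → ℝ) → ℝ) (hgm : Measurable g) (C : ℝ) (hgb : ∀ x, |g x| ≤ C)
    (m : (Fin k → ℝ) → (Fin d → ℝ)) (hm : ContDiff ℝ 1 m) :
    Differentiable ℝ (fun x : Fin k → ℝ =>
        ∫ y : Fin d → ℝ, g (m x + y) * gaussDensity S y)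
    ∧ ∀ (x : Fin k → ℝ) (j : Fin k),
        fderiv ℝ (fun x : Fin k → ℝ =>
            ∫ y : Fin d → ℝ, g (m x + y) * gaussDensity S y) x (Pi.single j 1)
          = ∑ i, fderiv ℝ (fun x => m x i) x (Pi.single j 1)
              * ∫ y : Fin d → ℝ, g (m x + y) * (S⁻¹).mulVec y i * gaussDensity S y := by
  have hm' : Differentiable ℝ m := hm.differentiable one_ne_zero
  have hF : ∀ x, HasFDerivAt (fun x => ∫ y, g (m x + y) * gaussDensity S y)
      ((dotProductCLM fun i => ∫ y, g (m x + y) * (S⁻¹ *ᵥ y) i * gaussDensity S y).comp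
        (fderiv ℝ m x)) x := fun x =>
    (hasFDerivAt_integral_comp_add_mul_gaussDensity hS hgm (C := C) hgb (m x)).comp x
      (hm' x).hasFDerivAt
  refine ⟨fun x => (hF x).differentiableAt, fun x j => ?_⟩
  rw [(hF x).fderiv, ContinuousLinearMap.comp_apply, dotProductCLM_apply, dotProduct]
  refine Finset.sum_congr rfl fun i _ => ?_
  rw [fderiv_apply (hm' x), ContinuousLinearMap.comp_apply, ContinuousLinearMap.proj_apply,
    mul_comm]

/-- differentiation under Gaussian smoothing: for bounded measurable `g`
and `C¹` mean function `m`, `F(x) = ∫ g(m(x)+y) p_Σ(y) dy` is differentiable and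
`∂_{x_j} F(x) = Σ_i ∂_{x_j} m^i(x) ∫ g(m(x)+y) (Σ⁻¹ y)_i p_Σ(y) dy`. -/
theorem gaussian_smoothing_differentiable {d k : ℕ} (hd : 1 ≤ d) (hk : 1 ≤ k)
    (S : Matrix (Fin d) (Fin d) ℝ) (hS : S.PosDef)
    (g : (Fin d → ℝ) → ℝ) (hgm : Measurable g) (C : ℝ) (hgb : ∀ x, |g x| ≤ C)
    (m : (Fin k → ℝ) → (Fin d → ℝ)) (hm : ContDiff ℝ 1 m) :
    Differentiable ℝ (fun x : Fin k → ℝ =>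
        ∫ y : Fin d → ℝ, g (m x + y) * gaussDensity S y)
    ∧ ∀ (x : Fin k → ℝ) (j : Fin k),
        fderiv ℝ (fun x : Fin k → ℝ =>
            ∫ y : Fin d → ℝ, g (m x + y) * gaussDensity S y) x (Pi.single j 1)
          = ∑ i, fderiv ℝ (fun x => m x i) x (Pi.single j 1)
              * ∫ y : Fin d → ℝ, g (m x + y) * (S⁻¹).mulVec y i * gaussDensity S y :=
  gaussian_smoothing_differentiable_general S hS g hgm C hgb m hm
end
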